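/- arXiv:2003.05059 — 7 statements merged into one kernel-verified Lean document; each statement's English description precedes it below -/
import Mathlib

section
/- The least element s* of the feasible set F satisfies: either s* = t_i, or s* = c + ρ for some c ∈ C. (The optimal conflict-zone entry time is either the vehicle's unconstrained arrival time or lies exactly one safety headway after some previously assigned entry time.) -/
/-- The least element s* of the feasible set F is either t_i itself, or equals
c + ρ for some already-assigned entry time c ∈ C. -/
theorem least_feasible_eq_ti_or_shifted (ρ : ℝ) (hρ : 0 < ρ) (ti : ℝ) (C : Finset ℝ)
    (sStar : ℝ)
    (hleast : IsLeast {s : ℝ | ti ≤ s ∧ ∀ c ∈ C, ρ ≤ |s - c|} sStar) :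
    sStar = ti ∨ ∃ c ∈ C, sStar = c + ρ := by
  by_contra h
  push_neg at h
  obtain ⟨hne, hC⟩ := h
  obtain ⟨⟨hti, hfeas⟩, hlb⟩ := hleast
  have htilt : ti < sStar := lt_of_le_of_ne hti (fun e => hne e.symm)
  set T : Finset ℝ :=
    insert (sStar - ti) ((C.filter (fun c => c + ρ < sStar)).image (fun c => sStar - (c + ρ)))
    with hT
  have hTne : T.Nonempty := ⟨sStar - ti, Finset.mem_insert_self _ _⟩
  set δ := T.min' hTne with hδ
  have hδmem := T.min'_mem hTne
  have hδpos : 0 < δ := by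
    rw [hδ]
    rcases Finset.mem_insert.mp hδmem with h1 | h2
    · rw [h1]; linarith
    · 
      obtain ⟨c, hc, hce⟩ := Finset.mem_image.mp h2
      have := (Finset.mem_filter.mp hc).2
      rw [← hce]; linarith
  have hδti : δ ≤ sStar - ti := Finset.min'_le _ _ (Finset.mem_insert_self _ _)
  have hs' : sStar - δ ∈ {s : ℝ | ti ≤ s ∧ ∀ c ∈ C, ρ ≤ |s - c|} := by
    refine ⟨by linarith, fun c hc => ?_⟩
    have habs := hfeas c hc
    rcases abs_cases (sStar - c) with ⟨he, _⟩ | ⟨he, _⟩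
    · -- sStar - c ≥ 0, so sStar ≥ c + ρ, and since ≠, sStar > c + ρ
      have hgt : c + ρ < sStar := by
        rcases lt_or_eq_of_le (by linarith [he ▸ habs] : c + ρ ≤ sStar) with h | h
        · exact h
        · exact absurd h.symm (hC c hc)
      have hmem : sStar - (c + ρ) ∈ T :=
        Finset.mem_insert_of_mem (Finset.mem_image.mpr
          ⟨c, Finset.mem_filter.mpr ⟨hc, hgt⟩, rfl⟩)
      have hle : δ ≤ sStar - (c + ρ) := Finset.min'_le _ _ hmem
      rw [abs_of_nonneg (by linarith)]
      linarith
    · -- sStar - c < 0 case: sStar ≤ c - ρ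
      rw [he] at habs
      rw [abs_of_nonpos (by linarith)]
      linarith
  have := hlb hs'
  linarith
end

section
/- Suppose every c ∈ C with c < t_i satisfies c + ρ ≤ t_i, the set A = {c ∈ C : c ≥ t_i} is nonempty, and min A < t_i + ρ. Then every s ∈ F satisfies s ≥ min A + ρ. (If the earliest later-scheduled conflicting vehicle enters within one headway of t_i, any feasible entry time must come at least one headway after it.) -/
/-- If every c ∈ C with c < t_i satisfies c + ρ ≤ t_i, the set
A = {c ∈ C : c ≥ t_i} is nonempty and min A < t_i + ρ, then every feasible
entry time s ∈ F satisfies s ≥ min A + ρ. -/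
theorem feasible_lower_bound_minA (ρ : ℝ) (hρ : 0 < ρ) (ti : ℝ) (C : Finset ℝ)
    (hearly : ∀ c ∈ C, c < ti → c + ρ ≤ ti)
    (hA : (C.filter (fun c => ti ≤ c)).Nonempty)
    (hmin : (C.filter (fun c => ti ≤ c)).min' hA < ti + ρ) :
    ∀ s ∈ {s : ℝ | ti ≤ s ∧ ∀ c ∈ C, ρ ≤ |s - c|},
      (C.filter (fun c => ti ≤ c)).min' hA + ρ ≤ s := by
  intro s hs
  obtain ⟨hts, hsep⟩ := hs
  set m := (C.filter (fun c => ti ≤ c)).min' hA with hm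
  have hmem := (C.filter (fun c => ti ≤ c)).min'_mem hA
  rw [Finset.mem_filter] at hmem
  have := hsep m hmem.1
  rcases le_abs.mp this with h | h
  · linarith
  · -- s ≤ m - ρ, but m < ti + ρ so s < ti, contradiction
    have : s ≤ m - ρ := by linarith
    linarith
end

section
/- (Case 2(ii) of Theorem 1.) Suppose every c ∈ C with c < t_i satisfies c + ρ ≤ t_i, the set A = {c ∈ C : c ≥ t_i} is nonempty, min A < t_i + ρ, and the set G of gap-starts of A is nonempty. Then the least element of the feasible set F equals min G + ρ: the vehicle enters the conflict zone in the earliest time slot of length at least 2ρ between two consecutive already-scheduled entry times. -/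
/-- The set A = {c ∈ C : c ≥ t_i} of conflicting entry times not earlier than t_i. -/
noncomputable def laterSet (ti : ℝ) (C : Finset ℝ) : Finset ℝ := C.filter (fun c => ti ≤ c)

/-- The set G of gap-starts of A: those a ∈ A such that the set {a' ∈ A : a' > a}
is nonempty and its minimum is ≥ a + 2ρ. -/
noncomputable def gapStarts (ρ ti : ℝ) (C : Finset ℝ) : Finset ℝ :=
  (laterSet ti C).filter (fun a =>
    ∃ h : ((laterSet ti C).filter (fun a' => a < a')).Nonempty,
      a + 2 * ρ ≤ ((laterSet ti C).filter (fun a' => a < a')).min' h)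

/-- Case 2(ii) of Theorem 1: if every c ∈ C with c < t_i satisfies c + ρ ≤ t_i,
A is nonempty, min A < t_i + ρ, and the set G of gap-starts of A is nonempty,
then the least element of the feasible set F equals min G + ρ. -/
theorem least_feasible_case2ii (ρ : ℝ) (hρ : 0 < ρ) (ti : ℝ) (C : Finset ℝ)
    (hearly : ∀ c ∈ C, c < ti → c + ρ ≤ ti)
    (hA : (laterSet ti C).Nonempty)
    (hmin : (laterSet ti C).min' hA < ti + ρ)
    (hG : (gapStarts ρ ti C).Nonempty) :
    IsLeast {s : ℝ | ti ≤ s ∧ ∀ c ∈ C, ρ ≤ |s - c|}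
      ((gapStarts ρ ti C).min' hG + ρ) := by
  classical
  set g0 := (gapStarts ρ ti C).min' hG with hg0def
  have hg0G : g0 ∈ gapStarts ρ ti C := Finset.min'_mem _ _
  rw [gapStarts, Finset.mem_filter] at hg0G
  obtain ⟨hg0A, hne, hgap⟩ := hg0G
  have hg0C : g0 ∈ C := (Finset.mem_filter.mp hg0A).1
  have htig0 : ti ≤ g0 := (Finset.mem_filter.mp hg0A).2
  constructor
  · refine ⟨by linarith, fun c hc => ?_⟩
    by_cases hcti : ti ≤ c
    · have hcA : c ∈ laterSet ti C := Finset.mem_filter.mpr ⟨hc, hcti⟩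
      by_cases hcg : c ≤ g0
      · exact le_abs.mpr (Or.inl (by linarith))
      · have hcF : c ∈ (laterSet ti C).filter (fun a' => g0 < a') :=
          Finset.mem_filter.mpr ⟨hcA, lt_of_not_ge hcg⟩
        have := Finset.min'_le _ c hcF
        exact le_abs.mpr (Or.inr (by simp only [neg_sub]; linarith))
    · have := hearly c hc (lt_of_not_ge hcti)
      exact le_abs.mpr (Or.inl (by linarith))
  · rintro s ⟨hs1, hs2⟩
    by_contra hcon
    push_neg at hcon
    -- s ≤ g0 - ρ
    have hsg0 : s ≤ g0 - ρ := by
      rcases le_abs.mp (hs2 g0 hg0C) with h | h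
      · linarith
      · simp only [neg_sub] at h; linarith
    -- min A + ρ ≤ s
    set m := (laterSet ti C).min' hA with hmdef
    have hmA : m ∈ laterSet ti C := Finset.min'_mem _ _
    have hmC : m ∈ C := (Finset.mem_filter.mp hmA).1
    have hms : m + ρ ≤ s := by
      rcases le_abs.mp (hs2 m hmC) with h | h
      · linarith
      · simp only [neg_sub] at h; linarith
    -- B = {a ∈ A : a + ρ ≤ s}, b = max B
    set B := (laterSet ti C).filter (fun a => a + ρ ≤ s) with hBdef
    have hBne : B.Nonempty := ⟨m, Finset.mem_filter.mpr ⟨hmA, hms⟩⟩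
    set b := B.max' hBne with hbdef
    have hbB : b ∈ B := Finset.max'_mem _ _
    obtain ⟨hbA, hbs⟩ := Finset.mem_filter.mp hbB
    have hbg0 : b < g0 := by linarith
    -- the set above b is nonempty (contains g0) and its min ≥ b + 2ρ
    have hg0F : g0 ∈ (laterSet ti C).filter (fun a' => b < a') :=
      Finset.mem_filter.mpr ⟨hg0A, hbg0⟩
    have hFne : ((laterSet ti C).filter (fun a' => b < a')).Nonempty := ⟨g0, hg0F⟩
    have hbound : ∀ c ∈ (laterSet ti C).filter (fun a' => b < a'), b + 2 * ρ ≤ c := by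
      intro c hcF
      obtain ⟨hcA, hbc⟩ := Finset.mem_filter.mp hcF
      have hcnB : ¬ (c + ρ ≤ s) := by
        intro hle
        have hcB : c ∈ B := Finset.mem_filter.mpr ⟨hcA, hle⟩
        have : c ≤ b := Finset.le_max' B c hcB
        linarith
      push_neg at hcnB
      have hcC : c ∈ C := (Finset.mem_filter.mp hcA).1
      rcases le_abs.mp (hs2 c hcC) with h | h
      · linarith
      · simp only [neg_sub] at h; linarith
    have hbG : b ∈ gapStarts ρ ti C := by
      rw [gapStarts, Finset.mem_filter]
      exact ⟨hbA, hFne, hbound _ (Finset.min'_mem _ _)⟩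
    have : g0 ≤ b := Finset.min'_le _ b hbG
    linarith
end

section
/- (Case 3 of Theorem 1.) Suppose every c ∈ C with c < t_i satisfies c + ρ ≤ t_i, the set A = {c ∈ C : c ≥ t_i} is nonempty, min A < t_i + ρ, and the set G of gap-starts of A is empty (there is no slot of length at least 2ρ between consecutive already-scheduled entry times). Then the least element of the feasible set F equals max A + ρ: the vehicle must enter the conflict zone one safety headway after the last already-scheduled conflicting vehicle. -/
/-- Case 3 of Theorem 1: if every c ∈ C with c < t_i satisfies c + ρ ≤ t_i,
A is nonempty, min A < t_i + ρ, and there are no gap-starts (G = ∅), then the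
least element of the feasible set F equals max A + ρ. -/
theorem least_feasible_case3 (ρ : ℝ) (hρ : 0 < ρ) (ti : ℝ) (C : Finset ℝ)
    (hearly : ∀ c ∈ C, c < ti → c + ρ ≤ ti)
    (hA : (laterSet ti C).Nonempty)
    (hmin : (laterSet ti C).min' hA < ti + ρ)
    (hG : gapStarts ρ ti C = ∅) :
    IsLeast {s : ℝ | ti ≤ s ∧ ∀ c ∈ C, ρ ≤ |s - c|}
      ((laterSet ti C).max' hA + ρ) := by
  set A := laterSet ti C with hAdef
  have hmem : ∀ a ∈ A, a ∈ C ∧ ti ≤ a := by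
    intro a ha
    exact Finset.mem_filter.mp ha
  have htimax : ti ≤ A.max' hA := (hmem _ (A.max'_mem hA)).2
  constructor
  · refine ⟨by linarith, ?_⟩
    intro c hc
    by_cases h : ti ≤ c
    · have hcA : c ∈ A := Finset.mem_filter.mpr ⟨hc, h⟩
      have := A.le_max' c hcA
      rw [abs_of_nonneg (by linarith)]; linarith
    · push_neg at h
      have := hearly c hc h
      rw [abs_of_nonneg (by linarith)]; linarith
  · intro s hs
    obtain ⟨hsti, hsafe⟩ := hs
    have claim : ∀ n (a : ℝ), a ∈ A → (A.filter (fun x => x < a)).card = n → a + ρ ≤ s := by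
      intro n
      induction n using Nat.strong_induction_on with
      | _ n ih =>
        intro a ha hcard
        have habs := hsafe a (hmem a ha).1
        have hcase : s ≤ a - ρ ∨ a + ρ ≤ s := by
          rcases le_abs.mp habs with h | h
          · right; linarith
          · left; linarith
        rcases hcase with hle | hge
        · exfalso
          by_cases hlo : (A.filter (fun x => x < a)).Nonempty
          · set B := A.filter (fun x => x < a) with hB
            set p := B.max' hlo with hp
            have hpB : p ∈ B := B.max'_mem hlo
            have hpA : p ∈ A := (Finset.mem_filter.mp hpB).1
            have hpa : p < a := (Finset.mem_filter.mp hpB).2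
            have hsub : A.filter (fun x => x < p) ⊂ B := by
              constructor
              · intro x hx
                obtain ⟨hx1, hx2⟩ := Finset.mem_filter.mp hx
                exact Finset.mem_filter.mpr ⟨hx1, lt_trans hx2 hpa⟩
              · intro hcon
                have := hcon hpB
                exact lt_irrefl p (Finset.mem_filter.mp this).2
            have hlt : (A.filter (fun x => x < p)).card < n := by
              rw [← hcard]; exact Finset.card_lt_card hsub
            have hpρ : p + ρ ≤ s := ih _ hlt p hpA rfl
            have hne : (A.filter (fun x => p < x)).Nonempty :=
              ⟨a, Finset.mem_filter.mpr ⟨ha, hpa⟩⟩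
            have hnotgap : p ∉ gapStarts ρ ti C := by rw [hG]; simp
            have hmlt : ((A.filter (fun x => p < x)).min' hne) < p + 2 * ρ := by
              by_contra hcon
              push_neg at hcon
              exact hnotgap (Finset.mem_filter.mpr ⟨hpA, ⟨hne, hcon⟩⟩)
            set m := (A.filter (fun x => p < x)).min' hne with hm
            have hmF : m ∈ A.filter (fun x => p < x) := Finset.min'_mem _ hne
            have hmA : m ∈ A := (Finset.mem_filter.mp hmF).1
            have hpm : p < m := (Finset.mem_filter.mp hmF).2
            have hma : m ≤ a := Finset.min'_le _ a (Finset.mem_filter.mpr ⟨ha, hpa⟩)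
            have habsm := hsafe m (hmem m hmA).1
            have hsm : m + ρ ≤ s := by
              rcases le_abs.mp habsm with h | h
              · linarith
              · linarith
            have hma' : m = a := by
              rcases lt_or_eq_of_le hma with h | h
              · exact absurd (Finset.le_max' B m (Finset.mem_filter.mpr ⟨hmA, h⟩))
                  (not_le.mpr hpm)
              · exact h
            rw [hma'] at hsm
            linarith
          · rw [Finset.not_nonempty_iff_eq_empty, Finset.filter_eq_empty_iff] at hlo
            have hamin : A.min' hA = a :=
              le_antisymm (A.min'_le a ha)
                (le_of_not_gt (fun h => hlo (A.min'_mem hA) h))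
            rw [hamin] at hmin
            linarith
        · exact hge
    have := claim _ (A.max' hA) (A.max'_mem hA) rfl
    linarith
end

section
/- (Theorem 1, combined form.) The least element s* of the feasible set F is given recursively by the following case formula: (i) if C is empty, s* = t_i; (ii) if C is nonempty and A = ∅, then s* = max(max C + ρ, t_i); (iii) if A ≠ ∅, every c ∈ C \ A satisfies c + ρ ≤ t_i, and t_i + ρ ≤ min A, then s* = t_i; (iv) if A ≠ ∅, every c ∈ C \ A satisfies c + ρ ≤ t_i, t_i + ρ > min A, and G ≠ ∅, then s* = min G + ρ; (v) if A ≠ ∅, every c ∈ C \ A satisfies c + ρ ≤ t_i, t_i + ρ > min A, and G = ∅, then s* = max A + ρ. -/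
lemma key_lb (ρ ti : ℝ) (hρ : 0 < ρ) (C : Finset ℝ) (s : ℝ)
    (hs : ti ≤ s) (hsep : ∀ c ∈ C, ρ ≤ |s - c|)
    (hA : (laterSet ti C).Nonempty)
    (hmin : (laterSet ti C).min' hA < ti + ρ)
    (t : ℝ) (ht : t ∈ laterSet ti C)
    (hng : ∀ a ∈ laterSet ti C, a < t → a ∉ gapStarts ρ ti C) :
    t + ρ ≤ s := by
  classical
  set A := laterSet ti C with hAdef
  set B := A.filter (fun a => a ≤ t ∧ s < a + ρ) with hBdef
  have hBempty : B = ∅ := by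
    by_contra hB
    have hBne : B.Nonempty := Finset.nonempty_iff_ne_empty.mpr hB
    set a0 := B.min' hBne with ha0
    have ha0B : a0 ∈ B := B.min'_mem hBne
    have ha0A : a0 ∈ A := (Finset.mem_filter.mp ha0B).1
    have ha0C : a0 ∈ C := (Finset.mem_filter.mp ha0A).1
    have ha0t : a0 ≤ t := ((Finset.mem_filter.mp ha0B).2).1
    have hsa0 : s < a0 + ρ := ((Finset.mem_filter.mp ha0B).2).2
    have hsle : s ≤ a0 - ρ := by
      have h := hsep a0 ha0C
      rcases abs_cases (s - a0) with ⟨h1, _⟩ | ⟨h1, _⟩ <;> rw [h1] at h <;> linarith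
    set L := A.filter (fun a => a < a0) with hLdef
    rcases L.eq_empty_or_nonempty with hL | hLne
    · -- a0 = min A
      have hminle : A.min' hA ≤ a0 := A.min'_le a0 ha0A
      have : ∀ a ∈ A, a0 ≤ a := by
        intro a haA
        by_contra hc
        push_neg at hc
        have : a ∈ L := Finset.mem_filter.mpr ⟨haA, hc⟩
        simp [hL] at this
      have h2 : a0 ≤ A.min' hA := this _ (A.min'_mem hA)
      have : a0 = A.min' hA := le_antisymm h2 hminle
      linarith [this ▸ hmin]
    · set a' := L.max' hLne with ha'
      have ha'L : a' ∈ L := L.max'_mem hLne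
      have ha'A : a' ∈ A := (Finset.mem_filter.mp ha'L).1
      have ha'lt : a' < a0 := (Finset.mem_filter.mp ha'L).2
      have ha'nB : a' ∉ B := by
        intro h
        have := B.min'_le a' h
        rw [← ha0] at this
        linarith
      have ha'ge : a' + ρ ≤ s := by
        by_contra hc
        push_neg at hc
        exact ha'nB (Finset.mem_filter.mpr ⟨ha'A, le_of_lt (lt_of_lt_of_le ha'lt ha0t), hc⟩)
      -- a' is not a gap-start, and min of elements above a' is a0
      set M := A.filter (fun a'' => a' < a'') with hM
      have hMne : M.Nonempty := ⟨a0, Finset.mem_filter.mpr ⟨ha0A, ha'lt⟩⟩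
      have hMmin : M.min' hMne = a0 := by
        apply le_antisymm (M.min'_le a0 (Finset.mem_filter.mpr ⟨ha0A, ha'lt⟩))
        apply Finset.le_min'
        intro m hm
        have hmA := (Finset.mem_filter.mp hm).1
        have hma' := (Finset.mem_filter.mp hm).2
        by_contra hc
        push_neg at hc
        have : m ∈ L := Finset.mem_filter.mpr ⟨hmA, hc⟩
        have := L.le_max' m this
        rw [← ha'] at this
        linarith
      have hnotgap := hng a' ha'A (lt_of_lt_of_le ha'lt ha0t)
      have hgap : a' ∈ gapStarts ρ ti C := by
        refine Finset.mem_filter.mpr ⟨ha'A, ⟨hMne, ?_⟩⟩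
        rw [hMmin]
        linarith
      exact hnotgap hgap
  -- conclude
  by_contra hc
  push_neg at hc
  have : t ∈ B := Finset.mem_filter.mpr ⟨ht, le_refl t, hc⟩
  rw [hBempty] at this
  exact absurd this (Finset.notMem_empty t)

/-- Theorem 1 (combined form): the least element s* of the feasible set F is
given by the recursive case formula. -/
theorem least_feasible_combined (ρ : ℝ) (hρ : 0 < ρ) (ti : ℝ) (C : Finset ℝ)
    (sStar : ℝ)
    (hleast : IsLeast {s : ℝ | ti ≤ s ∧ ∀ c ∈ C, ρ ≤ |s - c|} sStar) :
    (C = ∅ → sStar = ti) ∧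
    (∀ hC : C.Nonempty, laterSet ti C = ∅ →
      sStar = max (C.max' hC + ρ) ti) ∧
    (∀ hA : (laterSet ti C).Nonempty,
      (∀ c ∈ C \ laterSet ti C, c + ρ ≤ ti) →
      ti + ρ ≤ (laterSet ti C).min' hA →
      sStar = ti) ∧
    (∀ (hA : (laterSet ti C).Nonempty) (hG : (gapStarts ρ ti C).Nonempty),
      (∀ c ∈ C \ laterSet ti C, c + ρ ≤ ti) →
      (laterSet ti C).min' hA < ti + ρ →
      sStar = (gapStarts ρ ti C).min' hG + ρ) ∧
    (∀ hA : (laterSet ti C).Nonempty,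
      (∀ c ∈ C \ laterSet ti C, c + ρ ≤ ti) →
      (laterSet ti C).min' hA < ti + ρ →
      gapStarts ρ ti C = ∅ →
      sStar = (laterSet ti C).max' hA + ρ) := by
  classical
  obtain ⟨⟨hsti, hssep⟩, hlb⟩ := hleast
  have hout : ∀ c ∈ C, c ∉ laterSet ti C → c + ρ ≤ ti ∨ True := fun _ _ _ => Or.inr trivial
  refine ⟨?_, ?_, ?_, ?_, ?_⟩
  · -- case (i)
    intro hC
    apply le_antisymm
    · exact hlb ⟨le_refl ti, by simp [hC]⟩
    · exact hsti
  · -- case (ii)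
    intro hC hAe
    have hlt : ∀ c ∈ C, c < ti := by
      intro c hc
      by_contra h
      push_neg at h
      have : c ∈ laterSet ti C := Finset.mem_filter.mpr ⟨hc, h⟩
      simp [hAe] at this
    apply le_antisymm
    · apply hlb
      constructor
      · exact le_max_right _ _
      · intro c hc
        have h1 : c ≤ C.max' hC := C.le_max' c hc
        have h2 : C.max' hC + ρ ≤ max (C.max' hC + ρ) ti := le_max_left _ _
        rw [abs_of_nonneg (by linarith)]
        linarith
    · apply max_le
      · have hm : C.max' hC ∈ C := C.max'_mem hC
        have h1 := hssep _ hm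
        have h2 : C.max' hC < ti := hlt _ hm
        rcases abs_cases (sStar - C.max' hC) with ⟨h3, _⟩ | ⟨h3, _⟩ <;> rw [h3] at h1 <;> linarith
      · exact hsti
  · -- case (iii)
    intro hA hout hge
    apply le_antisymm
    · apply hlb
      refine ⟨le_refl ti, fun c hc => ?_⟩
      by_cases hcA : c ∈ laterSet ti C
      · have h1 : (laterSet ti C).min' hA ≤ c := Finset.min'_le _ c hcA
        rw [abs_of_nonpos (by linarith)]
        linarith
      · have := hout c (Finset.mem_sdiff.mpr ⟨hc, hcA⟩)
        rw [abs_of_nonneg (by linarith)]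
        linarith
    · exact hsti
  · -- case (iv)
    intro hA hG hout hlt
    set g := (gapStarts ρ ti C).min' hG with hg
    have hgG : g ∈ gapStarts ρ ti C := Finset.min'_mem _ hG
    obtain ⟨hgA, hgap⟩ := Finset.mem_filter.mp hgG
    have hgti : ti ≤ g := (Finset.mem_filter.mp hgA).2
    apply le_antisymm
    · apply hlb
      constructor
      · linarith
      · intro c hc
        by_cases hcA : c ∈ laterSet ti C
        · rcases le_or_gt c g with h | h
          · rw [abs_of_nonneg (by linarith)]; linarith
          · obtain ⟨hne, hmin⟩ := hgap
            have hcm : c ∈ (laterSet ti C).filter (fun a' => g < a') :=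
              Finset.mem_filter.mpr ⟨hcA, h⟩
            have := Finset.min'_le _ c hcm
            have : g + 2 * ρ ≤ c := le_trans hmin this
            rw [abs_of_nonpos (by linarith)]
            linarith
        · have := hout c (Finset.mem_sdiff.mpr ⟨hc, hcA⟩)
          rw [abs_of_nonneg (by linarith)]
          linarith
    · apply key_lb ρ ti hρ C sStar hsti hssep hA hlt g hgA
      intro a _ halt hagap
      have := Finset.min'_le _ a hagap
      rw [← hg] at this
      linarith
  · -- case (v)
    intro hA hout hlt hGe
    set m := (laterSet ti C).max' hA with hm
    have hmA : m ∈ laterSet ti C := Finset.max'_mem _ hA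
    have hmti : ti ≤ m := (Finset.mem_filter.mp hmA).2
    apply le_antisymm
    · apply hlb
      constructor
      · linarith
      · intro c hc
        by_cases hcA : c ∈ laterSet ti C
        · have h1 : c ≤ m := Finset.le_max' _ c hcA
          rw [abs_of_nonneg (by linarith)]
          linarith
        · have := hout c (Finset.mem_sdiff.mpr ⟨hc, hcA⟩)
          rw [abs_of_nonneg (by linarith)]
          linarith
    · apply key_lb ρ ti hρ C sStar hsti hssep hA hlt m hmA
      intro a _ _ hagap
      rw [hGe] at hagap
      exact absurd hagap (Finset.notMem_empty a)
end

section
/- Let u*(t) = a·t + b be an affine control whose trajectory from the initial state (p0, v0) satisfies p*(tf) = pf and v*(tf) = vf. Then for every continuous control u : [t0, tf] → ℝ whose trajectory from (p0, v0) also satisfies p(tf) = pf and v(tf) = vf, the energy cost satisfies ∫_{t0}^{tf} u(t)² dt ≥ ∫_{t0}^{tf} u*(t)² dt, with equality if and only if u = u* on [t0, tf]. (The affine control u*(t) = a_i·t + b_i from the Euler–Lagrange analysis is the unique energy-optimal control for fixed terminal position and speed.) -/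
/-!
Write `u = u* + w`. The terminal conditions say that `w` and its primitive `W` both have
integral zero over `[t0, tf]`; integrating by parts, `∫ t w = tf W(tf) - ∫ W = 0`, so `w` is
L²-orthogonal to every affine function, in particular to `u*`. Hence
`∫ u² = ∫ u*² + ∫ w²`, and for continuous `w` the last integral vanishes only if `w = 0`.
-/

open intervalIntegral Set

theorem ContinuousOn.exists_continuous_eqOn_Icc {α β : Type*} [LinearOrder α] [TopologicalSpace α]
    [OrderTopology α] [TopologicalSpace β] {f : α → β} {a b : α} (hab : a ≤ b)
    (hf : ContinuousOn f (Icc a b)) : ∃ g : α → β, Continuous g ∧ EqOn g f (Icc a b) :=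
  ⟨IccExtend hab ((Icc a b).domRestrict f), hf.domRestrict.Icc_extend',
    fun _ hx => IccExtend_of_mem hab _ hx⟩

section

variable {t₀ t₁ : ℝ}

theorem primitive_eqOn_Icc {E : Type*} [NormedAddCommGroup E] [NormedSpace ℝ E]
    {μ : MeasureTheory.Measure ℝ} {f g : ℝ → E} (hfg : EqOn f g (Icc t₀ t₁)) :
    EqOn (fun t => ∫ σ in t₀..t, f σ ∂μ) (fun t => ∫ σ in t₀..t, g σ ∂μ) (Icc t₀ t₁) :=
  fun _ ht => integral_congr <| hfg.mono <| uIcc_subset_Icc (left_mem_Icc.2 (ht.1.trans ht.2)) ht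

theorem integral_const_add_primitive {f : ℝ → ℝ} (hf : Continuous f) (c : ℝ) :
    ∫ t in t₀..t₁, (c + ∫ σ in t₀..t, f σ) = (t₁ - t₀) * c + ∫ t in t₀..t₁, ∫ σ in t₀..t, f σ := by
  rw [integral_add intervalIntegrable_const
    ((continuous_primitive hf.intervalIntegrable t₀).intervalIntegrable _ _), integral_const,
    smul_eq_mul]

theorem integral_id_mul_eq_zero {w : ℝ → ℝ} (hw : Continuous w)
    (h₀ : ∫ σ in t₀..t₁, w σ = 0) (h₁ : ∫ t in t₀..t₁, ∫ σ in t₀..t, w σ = 0) :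
    ∫ t in t₀..t₁, t * w t = 0 := by
  have := integral_mul_deriv_eq_deriv_mul (fun x _ => hasDerivAt_id x)
    (fun x _ => (hw.integral_hasStrictDerivAt t₀ x).hasDerivAt)
    intervalIntegrable_const (hw.intervalIntegrable t₀ t₁)
  simpa [h₀, h₁] using this

theorem integral_affine_mul_eq_zero {w : ℝ → ℝ} (hw : Continuous w)
    (h₀ : ∫ σ in t₀..t₁, w σ = 0) (h₁ : ∫ t in t₀..t₁, ∫ σ in t₀..t, w σ = 0) (a b : ℝ) :
    ∫ t in t₀..t₁, (a * t + b) * w t = 0 := by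
  simp_rw [add_mul, mul_assoc]
  rw [integral_add ((by fun_prop : Continuous fun t => a * (t * w t)).intervalIntegrable _ _)
    ((by fun_prop : Continuous fun t => b * w t).intervalIntegrable _ _), integral_const_mul,
    integral_const_mul, integral_id_mul_eq_zero hw h₀ h₁, h₀, mul_zero, mul_zero, add_zero]

theorem integral_add_sq_of_integral_mul_eq_zero {f g : ℝ → ℝ} (hf : Continuous f)
    (hg : Continuous g) (hfg : ∫ t in t₀..t₁, f t * g t = 0) :
    ∫ t in t₀..t₁, (f t + g t) ^ 2 = (∫ t in t₀..t₁, f t ^ 2) + ∫ t in t₀..t₁, g t ^ 2 := by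
  have hint {h : ℝ → ℝ} (hh : Continuous h) : IntervalIntegrable h MeasureTheory.volume t₀ t₁ :=
    hh.intervalIntegrable _ _
  simp_rw [add_sq, mul_assoc]
  rw [integral_add (hint (by fun_prop)) (hint (by fun_prop)),
    integral_add (hint (by fun_prop)) (hint (by fun_prop)), integral_const_mul, hfg, mul_zero,
    add_zero]

theorem integral_sq_eq_zero_iff_eqOn {w : ℝ → ℝ} (h : t₀ < t₁) (hw : ContinuousOn w (Icc t₀ t₁)) :
    ∫ t in t₀..t₁, w t ^ 2 = 0 ↔ EqOn w 0 (Icc t₀ t₁) := by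
  refine ⟨fun hzero t ht => ?_, fun hw0 => ?_⟩
  · by_contra hne
    have hpos := integral_lt_integral_of_continuousOn_of_le_of_exists_lt (f := fun _ => 0) h
      continuousOn_const (hw.pow 2) (fun x _ => sq_nonneg (w x)) ⟨t, ht, sq_pos_iff.2 hne⟩
    simp [hzero] at hpos
  · rw [integral_congr (g := fun _ => 0) fun t ht => ?_, integral_zero]
    rw [uIcc_of_le h.le] at ht
    simp [hw0 ht]

theorem integral_sq_eq_integral_affine_sq_add {u : ℝ → ℝ} (hu : Continuous u) (a b : ℝ)
    (hv : ∫ σ in t₀..t₁, u σ = ∫ σ in t₀..t₁, (a * σ + b))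
    (hp : ∫ t in t₀..t₁, ∫ σ in t₀..t, u σ = ∫ t in t₀..t₁, ∫ σ in t₀..t, (a * σ + b)) :
    ∫ t in t₀..t₁, u t ^ 2 =
      (∫ t in t₀..t₁, (a * t + b) ^ 2) + ∫ t in t₀..t₁, (u t - (a * t + b)) ^ 2 := by
  have hs : Continuous fun t : ℝ => a * t + b := by fun_prop
  have hsub (t : ℝ) : ∫ σ in t₀..t, (u σ - (a * σ + b)) =
      (∫ σ in t₀..t, u σ) - ∫ σ in t₀..t, (a * σ + b) :=
    integral_sub (hu.intervalIntegrable _ _) (hs.intervalIntegrable _ _)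
  have h₀ : ∫ σ in t₀..t₁, (u σ - (a * σ + b)) = 0 := by rw [hsub, hv, sub_self]
  have h₁ : ∫ t in t₀..t₁, ∫ σ in t₀..t, (u σ - (a * σ + b)) = 0 := by
    simp_rw [hsub]
    rw [integral_sub ((continuous_primitive hu.intervalIntegrable t₀).intervalIntegrable _ _)
      ((continuous_primitive hs.intervalIntegrable t₀).intervalIntegrable _ _), hp, sub_self]
  have horth := integral_affine_mul_eq_zero (hu.sub hs) h₀ h₁ a b
  simpa using integral_add_sq_of_integral_mul_eq_zero hs (hu.sub hs) horth

end

/-- The affine control u*(t) = a·t + b matching given terminal position and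
speed is energy-optimal among all continuous controls matching the same
boundary conditions, and is the unique such minimizer. -/
theorem affine_control_energy_optimal
    (t0 tf p0 v0 pf vf a b : ℝ) (h : t0 < tf)
    (hvStar : v0 + (∫ σ in t0..tf, (a * σ + b)) = vf)
    (hpStar : p0 + (∫ t in t0..tf, (v0 + ∫ σ in t0..t, (a * σ + b))) = pf) :
    ∀ u : ℝ → ℝ, ContinuousOn u (Set.Icc t0 tf) →
      v0 + (∫ σ in t0..tf, u σ) = vf →
      p0 + (∫ t in t0..tf, (v0 + ∫ σ in t0..t, u σ)) = pf →
      (∫ t in t0..tf, (a * t + b) ^ 2) ≤ (∫ t in t0..tf, (u t) ^ 2) ∧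
      ((∫ t in t0..tf, (u t) ^ 2) = (∫ t in t0..tf, (a * t + b) ^ 2) ↔
        ∀ t ∈ Set.Icc t0 tf, u t = a * t + b) := by
  intro u hu hv hp
  obtain ⟨U, hU, hUu⟩ := hu.exists_continuous_eqOn_Icc h.le
  have hIcc : uIcc t0 tf = Icc t0 tf := uIcc_of_le h.le
  have hs : Continuous fun t : ℝ => a * t + b := by fun_prop
  have hvU : ∫ σ in t0..tf, U σ = ∫ σ in t0..tf, (a * σ + b) := by
    rw [integral_congr (hIcc ▸ hUu)]
    linarith
  have hpU : ∫ t in t0..tf, ∫ σ in t0..t, U σ = ∫ t in t0..tf, ∫ σ in t0..t, (a * σ + b) := by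
    rw [← integral_congr fun t ht => congrArg (v0 + ·) (primitive_eqOn_Icc hUu (hIcc ▸ ht)),
      integral_const_add_primitive hU] at hp
    rw [integral_const_add_primitive hs] at hpStar
    linarith
  have henergy : ∫ t in t0..tf, u t ^ 2 = ∫ t in t0..tf, U t ^ 2 :=
    integral_congr fun t ht => by rw [hUu (hIcc ▸ ht)]
  rw [henergy, integral_sq_eq_integral_affine_sq_add hU a b hvU hpU]
  refine ⟨le_add_of_nonneg_right (integral_nonneg h.le fun t _ => sq_nonneg _), ?_⟩
  rw [add_eq_left, integral_sq_eq_zero_iff_eqOn (w := fun t => U t - (a * t + b)) h (by fun_prop)]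
  exact forall₂_congr fun t ht => by rw [← hUu ht, Pi.zero_apply, sub_eq_zero]
end

section
/- Let w : [t0, tf] → ℝ be continuous, and define δv(t) = ∫_{t0}^{t} w(σ) dσ and δp(t) = ∫_{t0}^{t} δv(σ) dσ. If δv(tf) = 0 and δp(tf) = 0, then for all a, b ∈ ℝ, ∫_{t0}^{tf} (a·t + b)·w(t) dt = 0. (Affine functions are orthogonal to every control perturbation that preserves the initial and terminal position and speed; this is the key integration-by-parts step establishing optimality of the affine control.) -/
open intervalIntegral

/-- Affine functions are orthogonal to every control perturbation w whose
induced speed and position perturbations vanish at the terminal time. -/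
theorem affine_orthogonal_to_admissible_perturbation
    (t0 tf : ℝ) (h : t0 < tf) (w : ℝ → ℝ)
    (hw : ContinuousOn w (Set.Icc t0 tf))
    (hδv : (∫ σ in t0..tf, w σ) = 0)
    (hδp : (∫ t in t0..tf, (∫ σ in t0..t, w σ)) = 0) :
    ∀ a b : ℝ, (∫ t in t0..tf, (a * t + b) * w t) = 0 := by
  intro a b
  set W : ℝ → ℝ := fun t => w ((Set.projIcc t0 tf h.le t : Set.Icc t0 tf) : ℝ) with hWdef
  have hWeq : ∀ t ∈ Set.Icc t0 tf, W t = w t := by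
    intro t ht
    simp [hWdef, Set.projIcc_of_mem h.le ht]
  have hWc : Continuous W :=
    hw.comp_continuous (continuous_subtype_val.comp continuous_projIcc)
      (fun x => (Set.projIcc t0 tf h.le x).2)
  set V : ℝ → ℝ := fun t => ∫ σ in t0..t, W σ with hVdef
  have hVd : ∀ x ∈ Set.uIcc t0 tf, HasDerivAt V (W x) x := fun x _ =>
    (hWc.integral_hasStrictDerivAt t0 x).hasDerivAt
  have hud : ∀ x ∈ Set.uIcc t0 tf, HasDerivAt (fun t => a * t + b) a x := fun x _ => by
    simpa using ((hasDerivAt_id x).const_mul a).add_const b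
  have hVw : ∀ t ∈ Set.Icc t0 tf, V t = ∫ σ in t0..t, w σ := by
    intro t ht
    refine intervalIntegral.integral_congr (fun σ hσ => hWeq σ ?_)
    rw [Set.uIcc_of_le ht.1] at hσ
    exact ⟨hσ.1, hσ.2.trans ht.2⟩
  have huIcc : Set.uIcc t0 tf = Set.Icc t0 tf := Set.uIcc_of_le h.le
  have key := intervalIntegral.integral_mul_deriv_eq_deriv_mul hud hVd
      (continuous_const.intervalIntegrable t0 tf) (hWc.intervalIntegrable t0 tf)
  have h1 : (∫ t in t0..tf, (a * t + b) * w t) = ∫ t in t0..tf, (a * t + b) * W t := by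
    refine intervalIntegral.integral_congr (fun t ht => ?_)
    rw [huIcc] at ht
    rw [hWeq t ht]
  have hVtf : V tf = 0 := by
    rw [hVw tf ⟨h.le, le_refl tf⟩, hδv]
  have hVt0 : V t0 = 0 := intervalIntegral.integral_same
  have h2 : (∫ t in t0..tf, a * V t) = 0 := by
    have : (∫ t in t0..tf, a * V t) = a * ∫ t in t0..tf, V t := by
      simp [intervalIntegral.integral_const_mul]
    rw [this]
    have : (∫ t in t0..tf, V t) = ∫ t in t0..tf, (∫ σ in t0..t, w σ) := by
      refine intervalIntegral.integral_congr (fun t ht => ?_)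
      rw [huIcc] at ht
      exact hVw t ht
    rw [this, hδp, mul_zero]
  rw [h1, key, hVtf, hVt0, h2]
  ring
end
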